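/- For a real number q > 0, let t = √q and let C(2,q) be the 3×3 matrix [[1 − q²√q, 1, 1], [5(1 − q√q), 3, 1], [10(1 − √q), 3 − √q, 0]]. Then det C(2,q) = −(t−1)³(t+2)(t²−2t−4). Consequently, for q > 0 with q ≠ 1, one has det C(2,q) = 0 if and only if √q = 1 + √5, i.e., q = 6 + 2√5. -/
import Mathlib


/- STATEMENT 17: with t = √q,
det [[1-q²√q, 1, 1],[5(1-q√q), 3, 1],[10(1-√q), 3-√q, 0]]
  = -(t-1)³(t+2)(t²-2t-4), and for q > 0, q ≠ 1 this determinant vanishes iff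
√q = 1+√5, i.e. iff q = 6+2√5. -/

noncomputable section

def Cmat2 (q : ℝ) : Matrix (Fin 3) (Fin 3) ℝ :=
  !![1 - q ^ 2 * Real.sqrt q, 1, 1;
     5 * (1 - q * Real.sqrt q), 3, 1;
     10 * (1 - Real.sqrt q), 3 - Real.sqrt q, 0]

theorem det_Cmat2 (q : ℝ) (hq : 0 < q) :
    (Cmat2 q).det
      = -(Real.sqrt q - 1) ^ 3 * (Real.sqrt q + 2) *
          ((Real.sqrt q) ^ 2 - 2 * Real.sqrt q - 4) ∧
    (q ≠ 1 →
      ((Cmat2 q).det = 0 ↔ Real.sqrt q = 1 + Real.sqrt 5) ∧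
      ((Cmat2 q).det = 0 ↔ q = 6 + 2 * Real.sqrt 5)) := by
  set t := Real.sqrt q with ht
  have ht0 : 0 < t := Real.sqrt_pos.mpr hq
  have ht2 : t ^ 2 = q := Real.sq_sqrt hq.le
  have h5 : Real.sqrt 5 ^ 2 = 5 := Real.sq_sqrt (by norm_num)
  have h5pos : (1:ℝ) < Real.sqrt 5 := by
    nlinarith [Real.sqrt_nonneg 5, h5]
  have hdet : (Cmat2 q).det
      = -(t - 1) ^ 3 * (t + 2) * (t ^ 2 - 2 * t - 4) := by
    simp [Cmat2, Matrix.det_fin_three]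
    rw [← ht, ← ht2]
    ring
  refine ⟨hdet, fun hq1 => ?_⟩
  have ht1 : t ≠ 1 := by
    intro h
    apply hq1
    rw [← ht2, h]; norm_num
  have key : (Cmat2 q).det = 0 ↔ t = 1 + Real.sqrt 5 := by
    rw [hdet]
    constructor
    · intro h
      have : (t - 1) ^ 3 = 0 ∨ (t + 2) = 0 ∨ (t ^ 2 - 2 * t - 4) = 0 := by
        rcases mul_eq_zero.mp h with h' | h'
        · have h'' : (t - 1) ^ 3 * (t + 2) = 0 := by linarith [neg_eq_zero.mp (by linarith : -((t-1)^3*(t+2)) = 0)]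
          rcases mul_eq_zero.mp h'' with h3 | h3
          · exact Or.inl h3
          · exact Or.inr (Or.inl h3)
        · exact Or.inr (Or.inr h')
      rcases this with h' | h' | h'
      · exact absurd (by nlinarith [pow_eq_zero_iff (n := 3) (by norm_num) |>.mp h'] : t = 1) ht1
      · linarith
      · -- t² - 2t - 4 = 0, t > 0 ⇒ t = 1 + √5
        have : (t - (1 + Real.sqrt 5)) * (t - (1 - Real.sqrt 5)) = 0 := by nlinarith
        rcases mul_eq_zero.mp this with h'' | h''
        · linarith
        · exfalso; nlinarith
    · intro h
      have : t ^ 2 - 2 * t - 4 = 0 := by rw [h]; nlinarith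
      rw [this]; ring
  refine ⟨key, key.trans ?_⟩
  constructor
  · intro h
    rw [← ht2, h]; nlinarith
  · intro h
    have : t ^ 2 = (1 + Real.sqrt 5) ^ 2 := by rw [ht2, h]; nlinarith
    have hpos : (0:ℝ) < 1 + Real.sqrt 5 := by linarith
    nlinarith
end
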